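/- arXiv:math/0408278 — 3 statements merged into one kernel-verified Lean document; each statement's English description precedes it below -/
import Mathlib

section
/- Let (u_ε)_{ε∈(0,1]} be an S-moderate net of smooth functions on ℝ^n such that for every q ∈ ℕ one has sup_{x∈ℝ^n}|u_ε(x)| = O(ε^q) as ε → 0. Then (u_ε) is S-negligible, i.e. for all multi-indices α, β and every q ∈ ℕ, sup_{x∈ℝ^n}|x^α ∂^β u_ε(x)| = O(ε^q) as ε → 0. -/
open MeasureTheory
open scoped ENNReal

noncomputable section

/-- `P ε` holds for all sufficiently small `ε ∈ (0,1]`. -/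
def EvSmall (P : ℝ → Prop) : Prop :=
  ∃ η : ℝ, 0 < η ∧ η ≤ 1 ∧ ∀ ε : ℝ, 0 < ε → ε ≤ η → P ε

/-- Partial derivative in the `i`-th coordinate direction. -/
def pd {n : ℕ} (i : Fin n) (f : (Fin n → ℝ) → ℂ) : (Fin n → ℝ) → ℂ :=
  fun x => fderiv ℝ f x (Pi.single i 1)

/-- Multi-index partial derivative `∂^β`. -/
def pdm {n : ℕ} (β : Fin n → ℕ) (f : (Fin n → ℝ) → ℂ) : (Fin n → ℝ) → ℂ :=
  (List.finRange n).foldr (fun i g => (pd i)^[β i] g) f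

/-- The monomial `x^α`. -/
def monom {n : ℕ} (α : Fin n → ℕ) (x : Fin n → ℝ) : ℝ := ∏ i, (x i) ^ (α i)

/-- A net of (smooth) functions on `ℝ^n` is S-moderate if for all multi-indices `α, β`
there is `N` with `sup_x |x^α ∂^β u_ε(x)| = O(ε^{-N})` as `ε → 0`. -/
def SMod {n : ℕ} (u : ℝ → (Fin n → ℝ) → ℂ) : Prop :=
  ∀ α β : Fin n → ℕ, ∃ N : ℕ, ∃ C : ℝ, EvSmall fun ε =>
    ∀ x, |monom α x| * ‖pdm β (u ε) x‖ ≤ C * ε ^ (-(N : ℤ))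

/-- A net of (smooth) functions on `ℝ^n` is S-negligible if for all multi-indices `α, β`
and every `q ∈ ℕ`, `sup_x |x^α ∂^β u_ε(x)| = O(ε^q)` as `ε → 0`. -/
def SNeg {n : ℕ} (u : ℝ → (Fin n → ℝ) → ℂ) : Prop :=
  ∀ α β : Fin n → ℕ, ∀ q : ℕ, ∃ C : ℝ, EvSmall fun ε =>
    ∀ x, |monom α x| * ‖pdm β (u ε) x‖ ≤ C * ε ^ q

/-- A moderate net of points of `ℝ^n`: `|x_ε| = O(ε^{-N})` for some `N`. -/
def PtMod {n : ℕ} (x : ℝ → Fin n → ℝ) : Prop :=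
  ∃ N : ℕ, ∃ C : ℝ, EvSmall fun ε => ‖x ε‖ ≤ C * ε ^ (-(N : ℤ))

/- ######## auxiliary lemmas ######## -/

lemma EvSmall.and' {P Q : ℝ → Prop} (hP : EvSmall P) (hQ : EvSmall Q) :
    EvSmall fun ε => P ε ∧ Q ε := by
  obtain ⟨η₁, h₁, h₁', hP⟩ := hP
  obtain ⟨η₂, h₂, h₂', hQ⟩ := hQ
  exact ⟨min η₁ η₂, lt_min h₁ h₂, (min_le_left _ _).trans h₁',
    fun ε hε hε' => ⟨hP ε hε (hε'.trans (min_le_left _ _)),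
      hQ ε hε (hε'.trans (min_le_right _ _))⟩⟩

lemma EvSmall.mono' {P Q : ℝ → Prop} (h : EvSmall P)
    (himp : ∀ ε, 0 < ε → ε ≤ 1 → P ε → Q ε) : EvSmall Q := by
  obtain ⟨η, hη, hη1, hP⟩ := h
  exact ⟨η, hη, hη1, fun ε hε hε' => himp ε hε (hε'.trans hη1) (hP ε hε hε')⟩

lemma pd_smooth {n : ℕ} {f : (Fin n → ℝ) → ℂ} (hf : ContDiff ℝ (⊤ : ℕ∞) f) (i : Fin n) :
    ContDiff ℝ (⊤ : ℕ∞) (pd i f) :=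
  (hf.fderiv_right (by simp)).clm_apply contDiff_const

lemma pd_iter_smooth {n : ℕ} {f : (Fin n → ℝ) → ℂ} (hf : ContDiff ℝ (⊤ : ℕ∞) f) (i : Fin n) (k : ℕ) :
    ContDiff ℝ (⊤ : ℕ∞) ((pd i)^[k] f) := by
  induction k with
  | zero => exact hf
  | succ k ih => rw [Function.iterate_succ_apply']; exact pd_smooth ih i

lemma foldr_smooth {n : ℕ} (β : Fin n → ℕ) (l : List (Fin n)) {f : (Fin n → ℝ) → ℂ}
    (hf : ContDiff ℝ (⊤ : ℕ∞) f) :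
    ContDiff ℝ (⊤ : ℕ∞) (l.foldr (fun i g => (pd i)^[β i] g) f) := by
  induction l with
  | nil => exact hf
  | cons j l ih => exact pd_iter_smooth ih j (β j)

lemma pdm_smooth {n : ℕ} (β : Fin n → ℕ) {f : (Fin n → ℝ) → ℂ} (hf : ContDiff ℝ (⊤ : ℕ∞) f) :
    ContDiff ℝ (⊤ : ℕ∞) (pdm β f) := foldr_smooth β _ hf

lemma foldr_eq_of_zero {n : ℕ} {β : Fin n → ℕ} {l : List (Fin n)}
    (h : ∀ j ∈ l, β j = 0) (f : (Fin n → ℝ) → ℂ) :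
    l.foldr (fun i g => (pd i)^[β i] g) f = f := by
  induction l with
  | nil => rfl
  | cons j l ih =>
    rw [List.foldr_cons, h j List.mem_cons_self, Function.iterate_zero, id_eq,
      ih (fun m hm => h m (List.mem_cons_of_mem _ hm))]

lemma foldr_congr' {n : ℕ} {β γ : Fin n → ℕ} {l : List (Fin n)}
    (h : ∀ j ∈ l, β j = γ j) (f : (Fin n → ℝ) → ℂ) :
    l.foldr (fun i g => (pd i)^[β i] g) f = l.foldr (fun i g => (pd i)^[γ i] g) f := by
  induction l with
  | nil => rfl
  | cons j l ih =>
    rw [List.foldr_cons, List.foldr_cons, h j List.mem_cons_self,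
      ih (fun m hm => h m (List.mem_cons_of_mem _ hm))]

lemma pdm_update {n : ℕ} {β : Fin n → ℕ} {i : Fin n} (hβ : ∀ j, j < i → β j = 0)
    (f : (Fin n → ℝ) → ℂ) :
    pdm (Function.update β i (β i + 1)) f = pd i (pdm β f) := by
  classical
  set β' := Function.update β i (β i + 1) with hβ'
  obtain ⟨s, t, hst⟩ := List.append_of_mem (List.mem_finRange i)
  have hp := List.pairwise_lt_finRange n
  rw [hst, List.pairwise_append] at hp
  have hs : ∀ j ∈ s, j < i := fun j hj => hp.2.2 j hj i List.mem_cons_self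
  have ht : ∀ j ∈ t, i < j := fun j hj => (List.pairwise_cons.mp hp.2.1).1 j hj
  have hne_s : ∀ j ∈ s, β' j = β j := fun j hj =>
    Function.update_of_ne (ne_of_lt (hs j hj)) _ _
  have hne_t : ∀ j ∈ t, β' j = β j := fun j hj =>
    Function.update_of_ne (ne_of_gt (ht j hj)) _ _
  unfold pdm
  rw [hst, List.foldr_append, List.foldr_append]
  rw [foldr_eq_of_zero (fun j hj => by rw [hne_s j hj]; exact hβ j (hs j hj))]
  rw [foldr_eq_of_zero (fun j hj => hβ j (hs j hj))]
  rw [List.foldr_cons, List.foldr_cons]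
  rw [foldr_congr' hne_t]
  rw [show β' i = β i + 1 from Function.update_self _ _ _]
  rw [Function.iterate_succ_apply']

lemma landau {n : ℕ} {f : (Fin n → ℝ) → ℂ} (hf : ContDiff ℝ (⊤ : ℕ∞) f) (i : Fin n)
    {A B h : ℝ} (hh : 0 < h) (hA : ∀ x, ‖f x‖ ≤ A) (hB : ∀ x, ‖pd i (pd i f) x‖ ≤ B)
    (x : Fin n → ℝ) : ‖pd i f x‖ ≤ 2 * A / h + h * B := by
  set e : Fin n → ℝ := Pi.single i 1 with he
  have key : ∀ (F : (Fin n → ℝ) → ℂ), ContDiff ℝ (⊤ : ℕ∞) F → ∀ t : ℝ,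
      HasDerivAt (fun s : ℝ => F (x + s • e)) (pd i F (x + t • e)) t := by
    intro F hF t
    have hline : HasDerivAt (fun s : ℝ => x + s • e) e t := by
      simpa using ((hasDerivAt_id t).smul_const e).const_add x
    have hFd : HasFDerivAt F (fderiv ℝ F (x + t • e)) (x + t • e) :=
      (hF.differentiable (by simp)).differentiableAt.hasFDerivAt
    simpa [pd, he, Function.comp_def] using hFd.comp_hasDerivAt t hline
  have hB0 : 0 ≤ B := le_trans (norm_nonneg _) (hB x)
  have hpdf : ContDiff ℝ (⊤ : ℕ∞) (pd i f) := pd_smooth hf i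
  have step1 : ∀ t ∈ Set.Icc (0:ℝ) h,
      ‖pd i f (x + t • e) - pd i f (x + (0:ℝ) • e)‖ ≤ B * h := by
    intro t ht
    have h1 := norm_image_sub_le_of_norm_deriv_le_segment'
      (f := fun s : ℝ => pd i f (x + s • e)) (f' := fun s : ℝ => pd i (pd i f) (x + s • e))
      (a := 0) (b := h)
      (fun s _ => (key _ hpdf s).hasDerivWithinAt)
      (fun s _ => hB _) t ht
    calc ‖pd i f (x + t • e) - pd i f (x + (0:ℝ) • e)‖ ≤ B * (t - 0) := h1
      _ ≤ B * h := by nlinarith [ht.1, ht.2]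
  set D := pd i f (x + (0:ℝ) • e) with hD
  have step2 := norm_image_sub_le_of_norm_deriv_le_segment'
      (f := fun s : ℝ => f (x + s • e) - s • D)
      (f' := fun s : ℝ => pd i f (x + s • e) - D)
      (a := 0) (b := h)
      (fun s _ => by
        simpa [Pi.sub_def] using ((key f hf s).sub ((hasDerivAt_id s).smul_const D)).hasDerivWithinAt)
      (fun s hs => step1 s ⟨hs.1, le_of_lt hs.2⟩) h ⟨le_of_lt hh, le_refl h⟩
  -- step2 : ‖(f (x + h•e) - h•D) - (f (x + 0•e) - 0•D)‖ ≤ B*h*(h - 0)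
  have hx0 : x + (0:ℝ) • e = x := by simp
  have hDx : D = pd i f x := by rw [hD, hx0]
  have tri : h * ‖D‖ ≤ 2 * A + B * h * h := by
    set a1 := f (x + h • e) with ha1
    set b1 := f (x + (0:ℝ) • e) with hb1
    have e2 : (h • D : ℂ) = (a1 - b1) - ((a1 - h • D) - (b1 - (0:ℝ) • D)) := by
      rw [zero_smul ℝ D, sub_zero]; ring
    have t1 := norm_sub_le (a1 - b1) ((a1 - h • D) - (b1 - (0:ℝ) • D))
    rw [← e2] at t1
    have e1 : ‖(h • D : ℂ)‖ = h * ‖D‖ := by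
      rw [norm_smul, Real.norm_eq_abs, abs_of_pos hh]
    rw [e1] at t1
    have t2 := norm_sub_le a1 b1
    have t3 := hA (x + h • e)
    have t4 := hA (x + (0:ℝ) • e)
    rw [← ha1] at t3
    rw [← hb1] at t4
    simp only [ha1, hb1] at step2 ⊢
    nlinarith [step2, t1, t2, t3, t4]
  rw [← hDx]
  have hne : h ≠ 0 := ne_of_gt hh
  have heq : (2 * A + B * h * h) / h = 2 * A / h + h * B := by
    rw [add_div, mul_div_cancel_right₀ _ hne, mul_comm B h]
  rw [← heq, le_div_iff₀ hh]
  linarith [tri]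

lemma neg0_all {n : ℕ} (u : ℝ → (Fin n → ℝ) → ℂ)
    (hsmooth : ∀ ε ∈ Set.Ioc (0 : ℝ) 1, ContDiff ℝ (⊤ : ℕ∞) (u ε))
    (hmod : SMod u)
    (hzero : ∀ q : ℕ, ∃ C : ℝ, EvSmall fun ε => ∀ x, ‖u ε x‖ ≤ C * ε ^ q) :
    ∀ (β : Fin n → ℕ) (q : ℕ), ∃ C : ℝ,
      EvSmall fun ε => ∀ x, ‖pdm β (u ε) x‖ ≤ C * ε ^ q := by
  classical
  suffices H : ∀ k (β : Fin n → ℕ), (∑ j, β j) = k → ∀ q, ∃ C : ℝ,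
      EvSmall fun ε => ∀ x, ‖pdm β (u ε) x‖ ≤ C * ε ^ q by
    exact fun β => H _ β rfl
  intro k
  induction k using Nat.strong_induction_on with
  | _ k ih =>
  intro β hβ q
  rcases Nat.eq_zero_or_pos k with hk | hk
  · subst hk
    have hβ0 : ∀ j, β j = 0 := by
      intro j
      have := Finset.sum_eq_zero_iff.mp hβ
      exact this j (Finset.mem_univ j)
    obtain ⟨C, hC⟩ := hzero q
    refine ⟨C, hC.mono' ?_⟩
    intro ε hε hε1 hP x
    rw [show pdm β (u ε) = u ε from foldr_eq_of_zero (fun j _ => hβ0 j) _]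
    exact hP x
  · have hex : ∃ i, β i ≠ 0 := by
      by_contra hcon
      push_neg at hcon
      rw [Finset.sum_eq_zero (fun j _ => hcon j)] at hβ
      omega
    obtain ⟨i, hi⟩ := hex
    set S : Finset (Fin n) := Finset.univ.filter (fun j => β j ≠ 0) with hS
    have hSne : S.Nonempty := ⟨i, by simp [hS, hi]⟩
    set i0 := S.min' hSne with hi0
    have hi0mem : β i0 ≠ 0 := by
      have := S.min'_mem hSne
      simp only [hS, Finset.mem_filter] at this
      exact this.2
    have hmin : ∀ j, j < i0 → β j = 0 := by
      intro j hj
      by_contra hj0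
      exact absurd hj (not_lt.mpr (S.min'_le j (by simp [hS, hj0])))
    set γ : Fin n → ℕ := Function.update β i0 (β i0 - 1) with hγ
    have hγ0 : ∀ j, j < i0 → γ j = 0 := fun j hj => by
      rw [hγ, Function.update_of_ne (ne_of_lt hj)]; exact hmin j hj
    have hβγ : β = Function.update γ i0 (γ i0 + 1) := by
      funext j
      by_cases hji : j = i0
      · subst hji
        rw [Function.update_self, hγ, Function.update_self]
        omega
      · rw [Function.update_of_ne hji, hγ, Function.update_of_ne hji]
    have hγsum : (∑ j, γ j) + 1 = k := by
      have hb : ∑ j, β j = β i0 + ∑ j ∈ Finset.univ \ {i0}, β j := by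
        conv_lhs => rw [← Function.update_eq_self i0 β]
        rw [Finset.sum_update_of_mem (Finset.mem_univ i0)]
      have hg : ∑ j, γ j = (β i0 - 1) + ∑ j ∈ Finset.univ \ {i0}, β j := by
        rw [hγ, Finset.sum_update_of_mem (Finset.mem_univ i0)]
      omega
    -- second derivative multi-index
    set δ : Fin n → ℕ := Function.update γ i0 (γ i0 + 2) with hδ
    have hγ0' : ∀ j, j < i0 → (Function.update γ i0 (γ i0 + 1)) j = 0 := fun j hj => by
      rw [Function.update_of_ne (ne_of_lt hj)]; exact hγ0 j hj
    have hpdmδ : ∀ f, pdm δ f = pd i0 (pd i0 (pdm γ f)) := by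
      intro f
      have e1 : pdm (Function.update γ i0 (γ i0 + 1)) f = pd i0 (pdm γ f) := pdm_update hγ0 f
      have e2 := pdm_update (β := Function.update γ i0 (γ i0 + 1)) hγ0' f
      rw [Function.update_self, Function.update_idem] at e2
      rw [hδ]
      rw [show γ i0 + 2 = γ i0 + 1 + 1 by ring]
      rw [e2, e1]
    have hpdmβ : ∀ f, pdm β f = pd i0 (pdm γ f) := by
      intro f
      rw [hβγ]; exact pdm_update hγ0 f
    obtain ⟨N, C1, hC1⟩ := hmod (fun _ => 0) δ
    obtain ⟨C2, hC2⟩ := ih (k - 1) (by omega) γ (by omega) (2 * q + N)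
    refine ⟨2 * |C2| + |C1|, (hC1.and' hC2).mono' ?_⟩
    rintro ε hε hε1 ⟨h1, h2⟩ x
    have hεne : ε ≠ 0 := ne_of_gt hε
    have hmon : ∀ y : Fin n → ℝ, |monom (n := n) (fun _ => (0:ℕ)) y| = 1 := by
      intro y; simp [monom]
    have hBbound : ∀ y, ‖pd i0 (pd i0 (pdm γ (u ε))) y‖ ≤ |C1| * ε ^ (-(N:ℤ)) := by
      intro y
      have := h1 y
      rw [hmon y, one_mul, hpdmδ (u ε)] at this
      calc ‖pd i0 (pd i0 (pdm γ (u ε))) y‖ ≤ C1 * ε ^ (-(N:ℤ)) := this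
        _ ≤ |C1| * ε ^ (-(N:ℤ)) := by
            have : (0:ℝ) < ε ^ (-(N:ℤ)) := zpow_pos hε _
            nlinarith [le_abs_self C1]
    have hAbound : ∀ y, ‖pdm γ (u ε) y‖ ≤ |C2| * ε ^ (2 * q + N) := by
      intro y
      calc ‖pdm γ (u ε) y‖ ≤ C2 * ε ^ (2 * q + N) := h2 y
        _ ≤ |C2| * ε ^ (2 * q + N) := by
            have : (0:ℝ) < ε ^ (2 * q + N) := pow_pos hε _
            nlinarith [le_abs_self C2]
    have husmooth : ContDiff ℝ (⊤ : ℕ∞) (u ε) := hsmooth ε ⟨hε, hε1⟩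
    have hγsmooth : ContDiff ℝ (⊤ : ℕ∞) (pdm γ (u ε)) := pdm_smooth γ husmooth
    have hhpos : (0:ℝ) < ε ^ (q + N) := pow_pos hε _
    have hland := landau hγsmooth i0 hhpos hAbound hBbound x
    rw [hpdmβ (u ε)]
    refine hland.trans ?_
    have harith : 2 * (|C2| * ε ^ (2 * q + N)) / ε ^ (q + N)
        + ε ^ (q + N) * (|C1| * ε ^ (-(N:ℤ))) = (2 * |C2| + |C1|) * ε ^ q := by
      have hz : (ε:ℝ) ^ (-(N:ℤ)) = (ε ^ N)⁻¹ := by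
        rw [zpow_neg, zpow_natCast]
      rw [hz]
      field_simp
      ring
    rw [harith]
  
/-- an S-moderate net whose 0-th derivative satisfies
`sup_x |u_ε(x)| = O(ε^q)` for every `q` is S-negligible. -/
theorem stmt0 {n : ℕ} (u : ℝ → (Fin n → ℝ) → ℂ)
    (hsmooth : ∀ ε ∈ Set.Ioc (0 : ℝ) 1, ContDiff ℝ (⊤ : ℕ∞) (u ε))
    (hmod : SMod u)
    (hzero : ∀ q : ℕ, ∃ C : ℝ, EvSmall fun ε => ∀ x, ‖u ε x‖ ≤ C * ε ^ q) :
    SNeg u := by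
  intro α β q
  obtain ⟨N, C1, hC1⟩ := hmod (fun j => 2 * α j) β
  obtain ⟨C2, hC2⟩ := neg0_all u hsmooth hmod hzero β (2 * q + N)
  refine ⟨Real.sqrt (|C1| * |C2|), (hC1.and' hC2).mono' ?_⟩
  rintro ε hε hε1 ⟨h1, h2⟩ x
  set a := |monom α x| * ‖pdm β (u ε) x‖ with ha
  have ha0 : 0 ≤ a := mul_nonneg (abs_nonneg _) (norm_nonneg _)
  have hm : monom (fun j => 2 * α j) x = (monom α x) ^ 2 := by
    simp only [monom, ← Finset.prod_pow]
    exact Finset.prod_congr rfl (fun j _ => by rw [← pow_mul, mul_comm])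
  have hmabs : |monom (fun j => 2 * α j) x| = |monom α x| ^ 2 := by
    rw [hm, abs_pow]
  have h1' : |monom α x| ^ 2 * ‖pdm β (u ε) x‖ ≤ |C1| * ε ^ (-(N:ℤ)) := by
    have := h1 x
    rw [hmabs] at this
    refine this.trans ?_
    have : (0:ℝ) < ε ^ (-(N:ℤ)) := zpow_pos hε _
    nlinarith [le_abs_self C1]
  have h2' : ‖pdm β (u ε) x‖ ≤ |C2| * ε ^ (2 * q + N) := by
    refine (h2 x).trans ?_
    have : (0:ℝ) < ε ^ (2 * q + N) := pow_pos hε _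
    nlinarith [le_abs_self C2]
  have hsq : a ^ 2 ≤ (|C1| * |C2|) * (ε ^ q) ^ 2 := by
    have step : a ^ 2 ≤ (|C1| * ε ^ (-(N:ℤ))) * (|C2| * ε ^ (2 * q + N)) := by
      have e1 : a ^ 2 = (|monom α x| ^ 2 * ‖pdm β (u ε) x‖) * ‖pdm β (u ε) x‖ := by
        rw [ha]; ring
      rw [e1]
      have hL0 : 0 ≤ |monom α x| ^ 2 * ‖pdm β (u ε) x‖ :=
        mul_nonneg (by positivity) (norm_nonneg _)
      exact mul_le_mul h1' h2' (norm_nonneg _) (le_trans hL0 h1')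
    refine step.trans (le_of_eq ?_)
    have hεne : ε ≠ 0 := ne_of_gt hε
    have hz : (ε:ℝ) ^ (-(N:ℤ)) = (ε ^ N)⁻¹ := by rw [zpow_neg, zpow_natCast]
    rw [hz]
    field_simp
    ring
  have := (Real.le_sqrt ha0 (by positivity)).mpr hsq
  refine this.trans (le_of_eq ?_)
  rw [Real.sqrt_mul (by positivity), Real.sqrt_sq (by positivity)]
end
end

section
/- Let Ω ⊆ ℝ^n be open, K ⊆ Ω compact, and (x_ε)_{ε∈(0,1]} a net of points with x_ε ∈ K for all sufficiently small ε. Let ψ₁, ψ₂ ∈ C_c^∞(Ω) each be identically 1 on a neighborhood of K, and let φ ∈ S(ℝ^n). Then the net (y ↦ (ψ₁(y) − ψ₂(y)) φ_ε(x_ε − y))_{ε} is negligible on Ω: for every compact K₁ ⊆ Ω, every multi-index α and every q ∈ ℕ, sup_{y∈K₁}|∂^α_y[(ψ₁(y) − ψ₂(y)) φ_ε(x_ε − y)]| = O(ε^q) as ε → 0. -/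
open MeasureTheory
open scoped ENNReal

noncomputable section

section aux
variable {n : ℕ}

lemma foldr_pd_replicate (i : Fin n) (m : ℕ) (g : (Fin n → ℝ) → ℂ) :
    (List.replicate m i).foldr pd g = (pd i)^[m] g := by
  induction m with
  | zero => rfl
  | succ m ih => simp [List.replicate_succ, ih, Function.iterate_succ_apply']

lemma pdm_eq_foldr (β : Fin n → ℕ) (f : (Fin n → ℝ) → ℂ) :
    pdm β f = ((List.finRange n).flatMap fun i => List.replicate (β i) i).foldr pd f := by
  unfold pdm
  induction (List.finRange n) with
  | nil => rfl
  | cons i L ih => simp [List.foldr_append, ih, foldr_pd_replicate]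

lemma foldr_pd_apply (L : List (Fin n)) (f : (Fin n → ℝ) → ℂ)
    (hf : ContDiff ℝ (⊤ : ℕ∞) f) (y : Fin n → ℝ) :
    L.foldr pd f y
      = iteratedFDeriv ℝ L.length f y (fun j => Pi.single (L.get j) 1) := by
  induction L generalizing y with
  | nil => simp
  | cons i L ih =>
    have hdiff : Differentiable ℝ (iteratedFDeriv ℝ L.length f) :=
      hf.differentiable_iteratedFDeriv (by exact_mod_cast lt_top_iff_ne_top.2 (by simp))
    have hrw : L.foldr pd f
        = fun z => iteratedFDeriv ℝ L.length f z (fun j => Pi.single (L.get j) 1) :=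
      funext fun z => ih z
    have h1 : (i :: L).foldr pd f y
        = fderiv ℝ (fun z => iteratedFDeriv ℝ L.length f z
            (fun j => Pi.single (L.get j) 1)) y (Pi.single i 1) := by
      rw [List.foldr_cons, ← hrw]; rfl
    rw [h1, fderiv_continuousMultilinear_apply_const_apply (hdiff y)]
    have h2 : (fun j : Fin (L.length + 1) => (Pi.single ((i :: L).get j) (1:ℝ) : Fin n → ℝ))
        = (Fin.cons (Pi.single i 1) (fun j => Pi.single (L.get j) 1) :
            Fin (L.length + 1) → (Fin n → ℝ)) := by
      funext j
      refine Fin.cases ?_ (fun j => ?_) j <;> simp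
    show _ = iteratedFDeriv ℝ (L.length + 1) f y
        (fun j : Fin (L.length + 1) => (Pi.single ((i :: L).get j) (1:ℝ) : Fin n → ℝ))
    rw [h2, iteratedFDeriv_succ_apply_left, Fin.cons_zero, Fin.tail_cons]

def mlen {n : ℕ} (β : Fin n → ℕ) : ℕ :=
  ((List.finRange n).flatMap fun i => List.replicate (β i) i).length

lemma norm_pdm_le (β : Fin n → ℕ) (f : (Fin n → ℝ) → ℂ)
    (hf : ContDiff ℝ (⊤ : ℕ∞) f) (y : Fin n → ℝ) :
    ‖pdm β f y‖ ≤ ‖iteratedFDeriv ℝ (mlen β) f y‖ := by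
  have h1 : pdm β f y = iteratedFDeriv ℝ (mlen β) f y
      (fun j => Pi.single (((List.finRange n).flatMap fun i => List.replicate (β i) i).get j) 1) := by
    rw [pdm_eq_foldr, foldr_pd_apply _ _ hf]; rfl
  rw [h1]
  calc ‖_‖ ≤ ‖iteratedFDeriv ℝ (mlen β) f y‖ * ∏ j, ‖(Pi.single (((List.finRange n).flatMap fun i => List.replicate (β i) i).get j) (1:ℝ) : Fin n → ℝ)‖ :=
        (iteratedFDeriv ℝ (mlen β) f y).le_opNorm _
    _ ≤ _ := by simp [Pi.norm_single]

end aux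


lemma keybound {n : ℕ} (φ : SchwartzMap (Fin n → ℝ) ℂ) (χr : (Fin n → ℝ) → ℝ)
    (hχ : ContDiff ℝ (⊤ : ℕ∞) fun z => (χr z : ℂ))
    (k m : ℕ) (M S δ ε : ℝ) (hδ : 0 < δ) (hε0 : 0 < ε) (hε1 : ε ≤ 1)
    (c : Fin n → ℝ)
    (hM : ∀ i ≤ k, ∀ z, ‖iteratedFDeriv ℝ i (fun z => (χr z : ℂ)) z‖ ≤ M)
    (hMnn : 0 ≤ M) (hS : ∀ i ≤ k, SchwartzMap.seminorm ℝ m i φ ≤ S) (hSnn : 0 ≤ S)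
    (y : Fin n → ℝ)
    (hcase : (∀ᶠ z in nhds y, χr z = 0) ∨ δ ≤ ‖c - y‖) :
    ‖iteratedFDeriv ℝ k (fun z => ((χr z : ℂ)) * ((ε ^ n : ℝ)⁻¹ • φ (ε⁻¹ • (c - z)))) y‖
      ≤ 2 ^ k * (M * ((ε ^ n : ℝ)⁻¹ *
          ((k.factorial : ℝ) * (S * (ε / δ) ^ m) * (ε⁻¹) ^ k))) := by
  have hεinv1 : 1 ≤ ε⁻¹ := (one_le_inv₀ hε0).2 hε1
  have hGnn : 0 ≤ (ε ^ n : ℝ)⁻¹ * ((k.factorial : ℝ) * (S * (ε / δ) ^ m) * (ε⁻¹) ^ k) := by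
    apply mul_nonneg (by positivity)
    exact mul_nonneg (mul_nonneg (Nat.cast_nonneg _)
      (mul_nonneg hSnn (by positivity))) (by positivity)
  have hRnn : 0 ≤ (2:ℝ) ^ k * (M * ((ε ^ n : ℝ)⁻¹ *
      ((k.factorial : ℝ) * (S * (ε / δ) ^ m) * (ε⁻¹) ^ k))) :=
    mul_nonneg (by positivity) (mul_nonneg hMnn hGnn)
  rcases hcase with h | h
  · -- the product vanishes near y
    have h0 : (fun z => ((χr z : ℂ)) * ((ε ^ n : ℝ)⁻¹ • φ (ε⁻¹ • (c - z))))
        =ᶠ[nhdsWithin y Set.univ] (fun _ => (0:ℂ)) :=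
      (h.mono fun z hz => by simp [hz]).filter_mono nhdsWithin_le_nhds
    have h0' : χr y = 0 := h.self_of_nhds
    have hz : iteratedFDeriv ℝ k
        (fun z => ((χr z : ℂ)) * ((ε ^ n : ℝ)⁻¹ • φ (ε⁻¹ • (c - z)))) y = 0 := by
      rw [← iteratedFDerivWithin_univ]
      rw [h0.iteratedFDerivWithin_eq (by simp [h0']) k]
      rw [iteratedFDerivWithin_univ, iteratedFDeriv_zero_fun]
      simp
    rw [hz]
    simpa using hRnn
  · -- away from K
    have hA : ContDiff ℝ (⊤ : ℕ∞) (fun z : Fin n → ℝ => ε⁻¹ • (c - z)) :=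
      (contDiff_const.sub contDiff_id).const_smul _
    have hφA : ContDiff ℝ (⊤ : ℕ∞) (fun z => φ (ε⁻¹ • (c - z))) := (φ.smooth ⊤).comp hA
    have hg : ContDiff ℝ (⊤ : ℕ∞) (fun z => (ε ^ n : ℝ)⁻¹ • φ (ε⁻¹ • (c - z))) :=
      hφA.const_smul _
    have hmul := norm_iteratedFDeriv_mul_le (𝕜 := ℝ) hχ hg y
      (n := k) (by exact_mod_cast le_top)
    -- bound on derivatives of φ at the rescaled point
    have hz0 : δ / ε ≤ ‖ε⁻¹ • (c - y)‖ := by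
      rw [norm_smul, Real.norm_eq_abs, abs_of_pos (inv_pos.2 hε0), div_eq_inv_mul]
      exact mul_le_mul_of_nonneg_left h (inv_pos.2 hε0).le
    have hz0pos : (0:ℝ) < δ / ε := div_pos hδ hε0
    have hCb : ∀ i, i ≤ k →
        ‖iteratedFDeriv ℝ i (⇑φ) ((fun z : Fin n → ℝ => ε⁻¹ • (c - z)) y)‖
          ≤ S * (ε / δ) ^ m := by
      intro i hi
      have hle := SchwartzMap.le_seminorm ℝ m i φ (ε⁻¹ • (c - y))
      have hzpos : (0:ℝ) < ‖ε⁻¹ • (c - y)‖ := lt_of_lt_of_le hz0pos hz0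
      have h1 : ‖iteratedFDeriv ℝ i (⇑φ) (ε⁻¹ • (c - y))‖
          ≤ SchwartzMap.seminorm ℝ m i φ / ‖ε⁻¹ • (c - y)‖ ^ m :=
        (le_div_iff₀ (pow_pos hzpos m)).2 (by rw [mul_comm]; exact hle)
      have h2 : SchwartzMap.seminorm ℝ m i φ / ‖ε⁻¹ • (c - y)‖ ^ m
          ≤ SchwartzMap.seminorm ℝ m i φ / (δ / ε) ^ m :=
        div_le_div_of_nonneg_left (apply_nonneg _ _) (pow_pos hz0pos m)
          (pow_le_pow_left₀ hz0pos.le hz0 m)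
      have h3 : SchwartzMap.seminorm ℝ m i φ / (δ / ε) ^ m
          = SchwartzMap.seminorm ℝ m i φ * (ε / δ) ^ m := by
        rw [div_eq_mul_inv, ← inv_pow, inv_div]
      calc ‖iteratedFDeriv ℝ i (⇑φ) ((fun z : Fin n → ℝ => ε⁻¹ • (c - z)) y)‖
          ≤ SchwartzMap.seminorm ℝ m i φ / ‖ε⁻¹ • (c - y)‖ ^ m := h1
        _ ≤ SchwartzMap.seminorm ℝ m i φ * (ε / δ) ^ m := h3 ▸ h2
        _ ≤ S * (ε / δ) ^ m :=
            mul_le_mul_of_nonneg_right (hS i hi) (by positivity)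
    -- derivatives of the affine map
    have hfder : fderiv ℝ (fun z : Fin n → ℝ => ε⁻¹ • (c - z))
        = fun _ => (ε⁻¹ • -(ContinuousLinearMap.id ℝ (Fin n → ℝ))) := by
      funext z
      exact (((hasFDerivAt_id z).const_sub c).const_smul ε⁻¹).fderiv
    have hLnorm : ‖ε⁻¹ • -(ContinuousLinearMap.id ℝ (Fin n → ℝ))‖ ≤ ε⁻¹ := by
      refine ContinuousLinearMap.opNorm_le_bound _ (inv_pos.2 hε0).le fun z => ?_
      simp [norm_smul, Real.norm_eq_abs, abs_of_pos (inv_pos.2 hε0), abs_of_pos hε0]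
    have hDb : ∀ i, 1 ≤ i → i ≤ k →
        ‖iteratedFDeriv ℝ i (fun z : Fin n → ℝ => ε⁻¹ • (c - z)) y‖ ≤ (ε⁻¹) ^ i := by
      intro i h1i _
      obtain ⟨j, rfl⟩ := Nat.exists_eq_add_of_le h1i
      rw [show 1 + j = j + 1 by ring, ← norm_iteratedFDeriv_fderiv, hfder]
      rcases Nat.eq_zero_or_pos j with rfl | hj
      · rw [norm_iteratedFDeriv_zero]
        calc ‖_‖ ≤ ε⁻¹ := hLnorm
          _ = (ε⁻¹) ^ 1 := (pow_one _).symm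
      · rw [iteratedFDeriv_const_of_ne hj.ne']
        simp only [Pi.zero_apply, norm_zero]
        positivity
    -- composition bound
    have hgb : ∀ j, j ≤ k →
        ‖iteratedFDeriv ℝ j (fun z => (ε ^ n : ℝ)⁻¹ • φ (ε⁻¹ • (c - z))) y‖
          ≤ (ε ^ n : ℝ)⁻¹ * ((k.factorial : ℝ) * (S * (ε / δ) ^ m) * (ε⁻¹) ^ k) := by
      intro j hj
      have hsm : iteratedFDeriv ℝ j (fun z => (ε ^ n : ℝ)⁻¹ • φ (ε⁻¹ • (c - z))) y
          = (ε ^ n : ℝ)⁻¹ • iteratedFDeriv ℝ j (fun z => φ (ε⁻¹ • (c - z))) y :=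
        iteratedFDeriv_const_smul_apply' (hφA.contDiffAt.of_le (by exact_mod_cast (le_top : (j:ℕ∞) ≤ ⊤)))
      have hcomp := norm_iteratedFDeriv_comp_le (𝕜 := ℝ) (n := j)
        (φ.smooth (⊤ : ℕ∞)) hA (by exact_mod_cast le_top) y
        (C := S * (ε / δ) ^ m) (D := ε⁻¹)
        (fun i hi => hCb i (hi.trans hj)) (fun i h1i hi => hDb i h1i (hi.trans hj))
      have hcompeq : (⇑φ ∘ fun z : Fin n → ℝ => ε⁻¹ • (c - z))
          = fun z => φ (ε⁻¹ • (c - z)) := rfl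
      rw [hsm]
      refine (ContinuousMultilinearMap.opNorm_smul_le _ _).trans ?_
      rw [Real.norm_eq_abs, abs_of_pos (a := ((ε^n:ℝ))⁻¹) (by positivity)]
      apply mul_le_mul_of_nonneg_left _ (by positivity)
      calc ‖iteratedFDeriv ℝ j (fun z => φ (ε⁻¹ • (c - z))) y‖
          ≤ (j.factorial : ℝ) * (S * (ε / δ) ^ m) * (ε⁻¹) ^ j := by
            rw [← hcompeq]; exact hcomp
        _ ≤ (k.factorial : ℝ) * (S * (ε / δ) ^ m) * (ε⁻¹) ^ k := by
            apply mul_le_mul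
            · exact mul_le_mul_of_nonneg_right
                (by exact_mod_cast Nat.factorial_le hj)
                (mul_nonneg hSnn (by positivity))
            · exact pow_le_pow_right₀ hεinv1 hj
            · positivity
            · positivity
    -- assemble
    refine hmul.trans ?_
    calc ∑ i ∈ Finset.range (k + 1), (k.choose i : ℝ)
          * ‖iteratedFDeriv ℝ i (fun z => (χr z : ℂ)) y‖
          * ‖iteratedFDeriv ℝ (k - i) (fun z => (ε ^ n : ℝ)⁻¹ • φ (ε⁻¹ • (c - z))) y‖
        ≤ ∑ i ∈ Finset.range (k + 1), (k.choose i : ℝ)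
          * (M * ((ε ^ n : ℝ)⁻¹ * ((k.factorial : ℝ) * (S * (ε / δ) ^ m) * (ε⁻¹) ^ k))) := by
          apply Finset.sum_le_sum
          intro i hi
          rw [mul_assoc]
          apply mul_le_mul_of_nonneg_left _ (Nat.cast_nonneg _)
          exact mul_le_mul (hM i (Nat.lt_succ_iff.1 (Finset.mem_range.1 hi)) y)
            (hgb (k - i) (Nat.sub_le _ _)) (norm_nonneg _) hMnn
      _ = 2 ^ k * (M * ((ε ^ n : ℝ)⁻¹ *
          ((k.factorial : ℝ) * (S * (ε / δ) ^ m) * (ε⁻¹) ^ k))) := by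
          rw [← Finset.sum_mul]
          congr 1
          push_cast [← Nat.cast_sum, Nat.sum_range_choose]
          norm_num

/-- the net `y ↦ (ψ₁(y) − ψ₂(y)) φ_ε(x_ε − y)` is negligible on `Ω` when
`ψ₁, ψ₂` are two cut-offs equal to `1` near the compact set `K` containing the `x_ε`. -/
theorem stmt4 {n : ℕ} (Ω : Set (Fin n → ℝ)) (hΩ : IsOpen Ω)
    (K : Set (Fin n → ℝ)) (hK : IsCompact K) (hKΩ : K ⊆ Ω)
    (x : ℝ → Fin n → ℝ) (hxK : EvSmall fun ε => x ε ∈ K)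
    (ψ₁ ψ₂ : (Fin n → ℝ) → ℝ)
    (hψ₁ : ContDiff ℝ (⊤ : ℕ∞) ψ₁) (hψ₁c : HasCompactSupport ψ₁) (hψ₁Ω : tsupport ψ₁ ⊆ Ω)
    (hψ₁1 : ∃ U : Set (Fin n → ℝ), IsOpen U ∧ K ⊆ U ∧ ∀ y ∈ U, ψ₁ y = 1)
    (hψ₂ : ContDiff ℝ (⊤ : ℕ∞) ψ₂) (hψ₂c : HasCompactSupport ψ₂) (hψ₂Ω : tsupport ψ₂ ⊆ Ω)
    (hψ₂1 : ∃ U : Set (Fin n → ℝ), IsOpen U ∧ K ⊆ U ∧ ∀ y ∈ U, ψ₂ y = 1)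
    (φ : SchwartzMap (Fin n → ℝ) ℂ) :
    ∀ K₁ : Set (Fin n → ℝ), IsCompact K₁ → K₁ ⊆ Ω → ∀ α : Fin n → ℕ, ∀ q : ℕ,
      ∃ C : ℝ, EvSmall fun ε => ∀ y ∈ K₁,
        ‖pdm α (fun z => ((ψ₁ z - ψ₂ z : ℝ) : ℂ) *
            ((ε ^ n : ℝ)⁻¹ • φ (ε⁻¹ • (x ε - z)))) y‖ ≤ C * ε ^ q := by

  obtain ⟨U₁, hU₁o, hKU₁, hU₁⟩ := hψ₁1
  obtain ⟨U₂, hU₂o, hKU₂, hU₂⟩ := hψ₂1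
  obtain ⟨δ, hδ, hthick⟩ := hK.exists_thickening_subset_open (hU₁o.inter hU₂o)
    (Set.subset_inter hKU₁ hKU₂)
  intro K₁ hK₁ hK₁Ω α q
  set k := mlen α with hk
  set m := q + n + k with hmdef
  have hχ : ContDiff ℝ (⊤ : ℕ∞) fun z => ((ψ₁ z - ψ₂ z : ℝ) : ℂ) :=
    Complex.ofRealCLM.contDiff.comp ((hψ₁.sub hψ₂).of_le (by simp))
  have hχc0 : HasCompactSupport (ψ₁ - ψ₂) := by
    simpa [sub_eq_add_neg] using hψ₁c.add hψ₂c.neg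
  have hχc : HasCompactSupport fun z => ((ψ₁ z - ψ₂ z : ℝ) : ℂ) :=
    hχc0.comp_left (g := Complex.ofReal) Complex.ofReal_zero
  choose Mc hMc using fun i : ℕ =>
    (hχ.continuous_iteratedFDeriv (m := i) (by exact_mod_cast le_top)
      ).bounded_above_of_compact_support (hχc.iteratedFDeriv i)
  set M := ∑ i ∈ Finset.range (k + 1), max (Mc i) 0 with hM
  have hMnn : 0 ≤ M := Finset.sum_nonneg fun i _ => le_max_right _ _
  have hMb : ∀ i ≤ k, ∀ z, ‖iteratedFDeriv ℝ i (fun z => ((ψ₁ z - ψ₂ z : ℝ) : ℂ)) z‖ ≤ M :=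
    fun i hi z =>
    le_trans (le_trans (hMc i z) (le_max_left _ _))
      (Finset.single_le_sum (f := fun i => max (Mc i) 0) (fun j _ => le_max_right _ _)
        (Finset.mem_range.2 (Nat.lt_succ_of_le hi)))
  set S := ∑ i ∈ Finset.range (k + 1), SchwartzMap.seminorm ℝ m i φ with hS
  have hSnn : 0 ≤ S := Finset.sum_nonneg fun i _ => apply_nonneg _ _
  have hSb : ∀ i ≤ k, SchwartzMap.seminorm ℝ m i φ ≤ S := fun i hi =>
    Finset.single_le_sum (f := fun i => SchwartzMap.seminorm ℝ m i φ)
      (fun j _ => apply_nonneg _ _) (Finset.mem_range.2 (Nat.lt_succ_of_le hi))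
  refine ⟨2 ^ k * M * (k.factorial : ℝ) * S / δ ^ m, ?_⟩
  obtain ⟨η, hη0, hη1, hηK⟩ := hxK
  refine ⟨η, hη0, hη1, fun ε hε0 hεη y hy => ?_⟩
  have hε1 : ε ≤ 1 := hεη.trans hη1
  have hxε : x ε ∈ K := hηK ε hε0 hεη
  have hcase : (∀ᶠ z in nhds y, (ψ₁ z - ψ₂ z : ℝ) = 0) ∨ δ ≤ ‖x ε - y‖ := by
    by_cases hyth : y ∈ Metric.thickening δ K
    · left
      have hmem : Metric.thickening δ K ∈ nhds y :=
        (Metric.isOpen_thickening).mem_nhds hyth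
      exact Filter.eventually_of_mem hmem fun z hz => by
        obtain ⟨h1, h2⟩ := hthick hz
        rw [hU₁ z h1, hU₂ z h2, sub_self]
    · right
      rw [Metric.mem_thickening_iff] at hyth
      push_neg at hyth
      have hdy := hyth (x ε) hxε
      rwa [dist_eq_norm, norm_sub_rev] at hdy
  have hcd : ContDiff ℝ (⊤ : ℕ∞)
      (fun z => ((ψ₁ z - ψ₂ z : ℝ) : ℂ) * ((ε ^ n : ℝ)⁻¹ • φ (ε⁻¹ • (x ε - z)))) :=
    hχ.mul (((φ.smooth ⊤).comp
      ((contDiff_const.sub contDiff_id).const_smul _)).const_smul _)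
  have hb := keybound φ (fun z => ψ₁ z - ψ₂ z) hχ k m M S δ ε hδ hε0 hε1 (x ε)
    hMb hMnn hSb hSnn y hcase
  refine (norm_pdm_le α _ hcd y).trans (hb.trans (le_of_eq ?_))
  have hεne : ε ≠ 0 := hε0.ne'
  have hδne : δ ≠ 0 := hδ.ne'
  rw [hmdef, div_pow, pow_add, pow_add]
  field_simp
  rw [mul_assoc (M * S), ← mul_pow, mul_one_div_cancel hεne, one_pow]
  ring
end
end

section
/- Let φ ∈ S(ℝ) with ∫_ℝ φ(y) dy = 1, let x ∈ ℝ, and let ψ ∈ C_c^∞(ℝ) be identically 1 on a neighborhood of x. Set u_ε(y) = \overline{φ_ε}(x − y) (complex conjugate). Then for every q ∈ ℕ, |∫_ℝ u_ε(y) ψ(y) φ_ε(x − y) dy − u_ε(x) − ε^{-1}(‖φ‖²_{L²(ℝ)} − \overline{φ}(0))| = O(ε^q) as ε → 0. In particular, if ‖φ‖²_{L²(ℝ)} ≠ \overline{φ}(0), then the net (∫_ℝ u_ε(y) ψ(y) φ_ε(x − y) dy − u_ε(x))_ε is not O(ε^q) for any q ≥ 2. -/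
open MeasureTheory
open scoped ENNReal

noncomputable section

theorem aux_int (φ : SchwartzMap ℝ ℂ) (x : ℝ) (ψ : ℝ → ℝ) (ε : ℝ) (hε : 0 < ε) :
    (∫ y, (starRingEnd ℂ (ε⁻¹ • φ (ε⁻¹ * (x - y)))) * (ψ y : ℂ) * (ε⁻¹ • φ (ε⁻¹ * (x - y))))
      = (ε⁻¹ : ℂ) * ((∫ z, ‖φ z‖^2 * ψ (x - ε * z) : ℝ) : ℂ) := by
  have h1 : ∀ y : ℝ, (starRingEnd ℂ (ε⁻¹ • φ (ε⁻¹ * (x - y)))) * (ψ y : ℂ) * (ε⁻¹ • φ (ε⁻¹ * (x - y)))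
      = (ε⁻¹ * ε⁻¹ : ℝ) • (((‖φ (ε⁻¹ * (x - y))‖^2 * ψ y : ℝ) : ℂ)) := by
    intro y
    set z := φ (ε⁻¹ * (x - y))
    rw [Complex.real_smul, Complex.real_smul, map_mul, Complex.conj_ofReal]
    push_cast
    rw [show (ε:ℂ)⁻¹ * (starRingEnd ℂ z) * ↑(ψ y) * ((ε:ℂ)⁻¹ * z)
        = (ε:ℂ)⁻¹ * (ε:ℂ)⁻¹ * (ψ y) * (starRingEnd ℂ z * z) by ring]
    rw [Complex.conj_mul']
    push_cast
    ring
  simp_rw [h1]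
  rw [integral_smul]
  rw [show (∫ a : ℝ, ((‖φ (ε⁻¹ * (x - a))‖^2 * ψ a : ℝ) : ℂ))
      = (((∫ a : ℝ, (‖φ (ε⁻¹ * (x - a))‖^2 * ψ a : ℝ)) : ℝ) : ℂ) from integral_ofReal]
  have h2 : (∫ y, (‖φ (ε⁻¹ * (x - y))‖^2 * ψ y : ℝ)) = ε * ∫ z, ‖φ z‖^2 * ψ (x - ε * z) := by
    have hh : ∀ y : ℝ, (‖φ (ε⁻¹ * (x - y))‖^2 * ψ y : ℝ)
        = (fun t => ‖φ (ε⁻¹ * t)‖^2 * ψ (x - t)) (x - y) := by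
      intro y; simp
    simp_rw [hh]
    rw [integral_sub_left_eq_self (fun t => ‖φ (ε⁻¹ * t)‖^2 * ψ (x - t)) volume x]
    have h3 : ∀ t : ℝ, ‖φ (ε⁻¹ * t)‖^2 * ψ (x - t)
        = (fun z => ‖φ z‖^2 * ψ (x - ε * z)) (ε⁻¹ * t) := by
      intro t; simp only []
      rw [mul_inv_cancel_left₀ hε.ne']
    simp_rw [h3]
    rw [Measure.integral_comp_inv_mul_left (fun z => ‖φ z‖^2 * ψ (x - ε * z)) ε]
    rw [abs_of_pos hε, smul_eq_mul]
  rw [h2, Complex.real_smul]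
  push_cast
  have hε2 : (ε:ℂ) ≠ 0 := by exact_mod_cast hε.ne'
  field_simp

/-- for `u_ε(y) = conj(φ_ε(x − y))`, the pairing `∫ u_ε ψ φ_ε(x−·)` differs
from `u_ε(x) + ε⁻¹(‖φ‖² − conj(φ(0)))` by `O(ε^q)` for every `q`; in particular if
`‖φ‖² ≠ conj(φ(0))` the net `∫ u_ε ψ φ_ε(x−·) − u_ε(x)` is not `O(ε^q)` for any `q ≥ 2`. -/
theorem stmt5 (φ : SchwartzMap ℝ ℂ) (hφ1 : (∫ y, φ y) = 1) (x : ℝ)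
    (ψ : ℝ → ℝ) (hψ : ContDiff ℝ (⊤ : ℕ∞) ψ) (hψc : HasCompactSupport ψ)
    (hψ1 : ∃ U : Set ℝ, IsOpen U ∧ x ∈ U ∧ ∀ y ∈ U, ψ y = 1)
    (u : ℝ → ℝ → ℂ)
    (hu : ∀ ε y, u ε y = starRingEnd ℂ (ε⁻¹ • φ (ε⁻¹ * (x - y)))) :
    (∀ q : ℕ, ∃ C : ℝ, EvSmall fun ε =>
      ‖(∫ y, u ε y * (ψ y : ℂ) * (ε⁻¹ • φ (ε⁻¹ * (x - y)))) - u ε x -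
          (ε⁻¹ : ℂ) * (((∫ y, ‖φ y‖ ^ 2) : ℝ) - starRingEnd ℂ (φ 0))‖ ≤ C * ε ^ q) ∧
    ((((∫ y, ‖φ y‖ ^ 2) : ℝ) : ℂ) ≠ starRingEnd ℂ (φ 0) →
      ∀ q : ℕ, 2 ≤ q → ¬ ∃ C : ℝ, EvSmall fun ε =>
        ‖(∫ y, u ε y * (ψ y : ℂ) * (ε⁻¹ • φ (ε⁻¹ * (x - y)))) - u ε x‖ ≤ C * ε ^ q) := by
  unfold EvSmall
  obtain ⟨U, hUopen, hxU, hψU⟩ := hψ1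
  obtain ⟨δ, hδ, hballU⟩ := Metric.isOpen_iff.mp hUopen x hxU
  obtain ⟨M, hM⟩ := hψc.exists_bound_of_continuous hψ.continuous
  have hM0 : 0 ≤ M := le_trans (norm_nonneg _) (hM x)
  -- boundedness of φ
  obtain ⟨B, hB0, hB⟩ : ∃ B, 0 < B ∧ ∀ z : ℝ, ‖φ z‖ ≤ B := by
    have := φ.decay 0 0
    simpa using this
  have hsq_int : Integrable (fun z : ℝ => ‖φ z‖ ^ 2) := by
    have h := ((φ.integrable (μ := volume)).norm.bdd_mul φ.continuous.norm.aestronglyMeasurable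
      (Filter.Eventually.of_forall fun z => by simpa using hB z))
    simpa [sq] using h
  have hφnorm_int : Integrable (fun z : ℝ => ‖φ z‖) := (φ.integrable (μ := volume)).norm
  have hInorm : (0:ℝ) ≤ ∫ z, ‖φ z‖ := integral_nonneg fun _ => norm_nonneg _
  -- the key estimate
  have key : ∀ q : ℕ, ∃ C : ℝ, 0 ≤ C ∧ ∀ ε : ℝ, 0 < ε →
      ‖(∫ y, u ε y * (ψ y : ℂ) * (ε⁻¹ • φ (ε⁻¹ * (x - y)))) - u ε x -
          (ε⁻¹ : ℂ) * (((∫ y, ‖φ y‖ ^ 2) : ℝ) - starRingEnd ℂ (φ 0))‖ ≤ C * ε ^ q := by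
    intro q
    obtain ⟨Cq, hCq0, hCq⟩ : ∃ C, 0 < C ∧ ∀ z : ℝ, |z| ^ (q+1) * ‖φ z‖ ≤ C := by
      have := φ.decay (q+1) 0
      simpa using this
    refine ⟨(M + 1) * Cq * (δ⁻¹) ^ (q+1) * ∫ z, ‖φ z‖, by positivity, ?_⟩
    intro ε hε
    set K : ℝ := (M + 1) * Cq * (δ⁻¹) ^ (q+1) with hK
    have hK0 : 0 ≤ K := by positivity
    -- integrability of the shifted product
    have hg_int : Integrable (fun z : ℝ => ‖φ z‖ ^ 2 * ψ (x - ε * z)) := by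
      have hcont : Continuous fun z : ℝ => ψ (x - ε * z) :=
        hψ.continuous.comp (continuous_const.sub (continuous_const.mul continuous_id))
      have h := hsq_int.bdd_mul hcont.aestronglyMeasurable (Filter.Eventually.of_forall fun z => hM _)
      simpa [mul_comm] using h
    have hDint : (∫ z, (‖φ z‖ ^ 2 * ψ (x - ε * z) - ‖φ z‖ ^ 2))
        = (∫ z, ‖φ z‖ ^ 2 * ψ (x - ε * z)) - ∫ z, ‖φ z‖ ^ 2 :=
      integral_sub hg_int hsq_int
    -- pointwise bound
    have hpt : ∀ z : ℝ, |‖φ z‖ ^ 2 * ψ (x - ε * z) - ‖φ z‖ ^ 2|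
        ≤ K * ε ^ (q+1) * ‖φ z‖ := by
      intro z
      rcases lt_or_ge (|ε * z|) δ with hlt | hge
      · have hmem : x - ε * z ∈ U := by
          apply hballU
          rw [Metric.mem_ball, Real.dist_eq]
          rw [show x - ε * z - x = -(ε * z) by ring, abs_neg]
          exact hlt
        rw [hψU _ hmem]
        simp only [mul_one, sub_self, abs_zero]
        positivity
      · -- tail estimate
        have hz : δ / ε ≤ |z| := by
          rw [div_le_iff₀ hε]
          rw [abs_mul, abs_of_pos hε] at hge
          linarith [hge]
        have hzpow : (δ / ε) ^ (q+1) ≤ |z| ^ (q+1) :=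
          pow_le_pow_left₀ (by positivity) hz _
        have h1 : (δ / ε) ^ (q+1) * ‖φ z‖ ≤ Cq :=
          le_trans (mul_le_mul_of_nonneg_right hzpow (norm_nonneg _)) (hCq z)
        have hpow_pos : (0:ℝ) < (δ / ε) ^ (q+1) := by positivity
        have h2 : ‖φ z‖ ≤ Cq * ε ^ (q+1) * (δ⁻¹) ^ (q+1) := by
          have h3 : ‖φ z‖ ≤ Cq / (δ / ε) ^ (q+1) := by
            rw [le_div_iff₀ hpow_pos]
            linarith [h1, mul_comm ((δ / ε) ^ (q+1)) ‖φ z‖]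
          have h4 : Cq / (δ / ε) ^ (q+1) = Cq * ε ^ (q+1) * (δ⁻¹) ^ (q+1) := by
            rw [div_pow]
            field_simp
            rw [← mul_pow, mul_one_div_cancel hδ.ne', one_pow]
          linarith [h3, h4.le, h4.ge]
        have hψbd : |ψ (x - ε * z) - 1| ≤ M + 1 := by
          have hb := hM (x - ε * z)
          rw [Real.norm_eq_abs] at hb
          calc |ψ (x - ε * z) - 1| ≤ |ψ (x - ε * z)| + |(1:ℝ)| := abs_sub _ _
            _ ≤ M + 1 := by rw [abs_one]; linarith
        have heq : ‖φ z‖ ^ 2 * ψ (x - ε * z) - ‖φ z‖ ^ 2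
            = ‖φ z‖ ^ 2 * (ψ (x - ε * z) - 1) := by ring
        rw [heq, abs_mul, abs_of_nonneg (by positivity : (0:ℝ) ≤ ‖φ z‖ ^ 2)]
        have hnn : (0:ℝ) ≤ ‖φ z‖ := norm_nonneg _
        calc ‖φ z‖ ^ 2 * |ψ (x - ε * z) - 1|
            ≤ ‖φ z‖ ^ 2 * (M + 1) := by
              apply mul_le_mul_of_nonneg_left hψbd (by positivity)
          _ = ‖φ z‖ * ‖φ z‖ * (M + 1) := by ring
          _ ≤ (Cq * ε ^ (q+1) * (δ⁻¹) ^ (q+1)) * ‖φ z‖ * (M + 1) := by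
              apply mul_le_mul_of_nonneg_right _ (by linarith)
              exact mul_le_mul_of_nonneg_right h2 hnn
          _ = K * ε ^ (q+1) * ‖φ z‖ := by rw [hK]; ring
    -- integral bound
    have hint_bd : |∫ z, (‖φ z‖ ^ 2 * ψ (x - ε * z) - ‖φ z‖ ^ 2)|
        ≤ K * ε ^ (q+1) * ∫ z, ‖φ z‖ := by
      have hgint : Integrable (fun z : ℝ => K * ε ^ (q+1) * ‖φ z‖) :=
        hφnorm_int.const_mul _
      have := norm_integral_le_of_norm_le hgint (Filter.Eventually.of_forall fun z => by
        rw [Real.norm_eq_abs]; exact hpt z)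
      rw [Real.norm_eq_abs] at this
      rwa [integral_const_mul] at this
    -- rewrite the expression
    have hI : (∫ y, u ε y * (ψ y : ℂ) * (ε⁻¹ • φ (ε⁻¹ * (x - y))))
        = (ε⁻¹ : ℂ) * ((∫ z, ‖φ z‖^2 * ψ (x - ε * z) : ℝ) : ℂ) := by
      simp_rw [hu]
      exact aux_int φ x ψ ε hε
    have hux : u ε x = (ε⁻¹ : ℂ) * starRingEnd ℂ (φ 0) := by
      rw [hu]
      simp [Complex.real_smul, map_mul, Complex.conj_ofReal]
    have hEeq : (∫ y, u ε y * (ψ y : ℂ) * (ε⁻¹ • φ (ε⁻¹ * (x - y)))) - u ε x -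
          (ε⁻¹ : ℂ) * (((∫ y, ‖φ y‖ ^ 2) : ℝ) - starRingEnd ℂ (φ 0))
        = (ε⁻¹ : ℂ) * ((∫ z, (‖φ z‖ ^ 2 * ψ (x - ε * z) - ‖φ z‖ ^ 2) : ℝ) : ℂ) := by
      rw [hI, hux, hDint]
      push_cast
      ring
    rw [hEeq, norm_mul]
    rw [show ‖((ε:ℂ))⁻¹‖ = ε⁻¹ by
      rw [norm_inv, Complex.norm_real, Real.norm_eq_abs, abs_of_pos hε]]
    rw [Complex.norm_real, Real.norm_eq_abs]
    calc ε⁻¹ * |∫ z, (‖φ z‖ ^ 2 * ψ (x - ε * z) - ‖φ z‖ ^ 2)|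
        ≤ ε⁻¹ * (K * ε ^ (q+1) * ∫ z, ‖φ z‖) :=
          mul_le_mul_of_nonneg_left hint_bd (by positivity)
      _ = (K * ∫ z, ‖φ z‖) * ε ^ q := by
          rw [pow_succ]
          field_simp
  constructor
  · intro q
    obtain ⟨C, hC0, hC⟩ := key q
    exact ⟨C, 1, one_pos, le_refl 1, fun ε hε _ => hC ε hε⟩
  · rintro hne q hq ⟨C2, η2, hη2, hη2le, hbd2⟩
    obtain ⟨C1, hC10, hC1⟩ := key q
    set v : ℂ := (((∫ y, ‖φ y‖ ^ 2) : ℝ) : ℂ) - starRingEnd ℂ (φ 0) with hv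
    have hvne : v ≠ 0 := sub_ne_zero.mpr hne
    have hc : 0 < ‖v‖ := norm_pos_iff.mpr hvne
    set K0 : ℝ := C1 + C2 with hK0
    set ε0 : ℝ := min η2 (‖v‖ / (2 * |K0| + 1)) with hε0
    have hε0pos : 0 < ε0 := lt_min hη2 (by positivity)
    have hε0le1 : ε0 ≤ 1 := le_trans (min_le_left _ _) hη2le
    have h1 := hC1 ε0 hε0pos
    have h2 := hbd2 ε0 hε0pos (min_le_left _ _)
    have hnorm : (ε0⁻¹ : ℝ) * ‖v‖ ≤ K0 * ε0 ^ q := by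
      have hiden : (ε0⁻¹ : ℂ) * v
          = ((∫ y, u ε0 y * (ψ y : ℂ) * (ε0⁻¹ • φ (ε0⁻¹ * (x - y)))) - u ε0 x)
            - ((∫ y, u ε0 y * (ψ y : ℂ) * (ε0⁻¹ • φ (ε0⁻¹ * (x - y)))) - u ε0 x -
              (ε0⁻¹ : ℂ) * v) := by ring
      have := norm_sub_le ((∫ y, u ε0 y * (ψ y : ℂ) * (ε0⁻¹ • φ (ε0⁻¹ * (x - y)))) - u ε0 x)
        ((∫ y, u ε0 y * (ψ y : ℂ) * (ε0⁻¹ • φ (ε0⁻¹ * (x - y)))) - u ε0 x - (ε0⁻¹ : ℂ) * v)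
      rw [← hiden] at this
      have hn : ‖(ε0⁻¹ : ℂ) * v‖ = ε0⁻¹ * ‖v‖ := by
        rw [norm_mul, norm_inv, Complex.norm_real, Real.norm_eq_abs, abs_of_pos hε0pos]
      rw [hn] at this
      calc ε0⁻¹ * ‖v‖ ≤ _ := this
        _ ≤ C2 * ε0 ^ q + C1 * ε0 ^ q := add_le_add h2 h1
        _ = K0 * ε0 ^ q := by rw [hK0]; ring
    have hcle : ‖v‖ ≤ K0 * ε0 ^ (q+1) := by
      have := mul_le_mul_of_nonneg_left hnorm (le_of_lt hε0pos)
      rw [← mul_assoc, mul_inv_cancel₀ hε0pos.ne', one_mul] at this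
      calc ‖v‖ ≤ ε0 * (K0 * ε0 ^ q) := this
        _ = K0 * ε0 ^ (q+1) := by rw [pow_succ]; ring
    have hpow_le : ε0 ^ (q+1) ≤ ε0 := by
      apply pow_le_of_le_one hε0pos.le hε0le1 (Nat.succ_ne_zero q)
    have hK0pos : 0 < K0 := by
      by_contra h
      push_neg at h
      have : K0 * ε0 ^ (q+1) ≤ 0 := mul_nonpos_of_nonpos_of_nonneg h (by positivity)
      linarith
    have hfinal : ‖v‖ ≤ K0 * ε0 := by
      calc ‖v‖ ≤ K0 * ε0 ^ (q+1) := hcle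
        _ ≤ K0 * ε0 := mul_le_mul_of_nonneg_left hpow_le hK0pos.le
    have hε0le : ε0 ≤ ‖v‖ / (2 * |K0| + 1) := min_le_right _ _
    have habs : K0 ≤ |K0| := le_abs_self _
    have : ‖v‖ ≤ |K0| * (‖v‖ / (2 * |K0| + 1)) := by
      calc ‖v‖ ≤ K0 * ε0 := hfinal
        _ ≤ |K0| * ε0 := mul_le_mul_of_nonneg_right habs hε0pos.le
        _ ≤ |K0| * (‖v‖ / (2 * |K0| + 1)) :=
            mul_le_mul_of_nonneg_left hε0le (abs_nonneg _)
    have h2K : |K0| * (‖v‖ / (2 * |K0| + 1)) < ‖v‖ := by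
      rw [mul_div_assoc']
      rw [div_lt_iff₀ (by positivity)]
      nlinarith [abs_nonneg K0, hc]
    linarith
end
end
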